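/- Assume condition (A) holds. Then for every vertex u ∈ 𝔽₂^X, either the small cube S_u containing u intersects the Hamming code C, or there exists x ∈ X such that the small cube S_{u + b(x)} containing u + b(x) intersects C. -/

import Mathlib

/-!
The map `φ` sends the direction space of the small cubes onto `W`, so the small cube through
`u` meets `C = ker φ` exactly when `φ u ∈ W`. If `φ u ∉ W`, condition (A) gives some `x ∈ X`
in the coset of `φ u`; over `𝔽₂` this means `φ (u + b(x)) = φ u + x ∈ W`.
-/

open Submodule

section Coset

variable {R M N : Type*} [Ring R] [AddCommGroup M] [AddCommGroup N] [Module R M] [Module R N]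

theorem exists_mem_ker_sub_mem_of_apply_mem_map {f : M →ₗ[R] N} {S : Submodule R M} {a : M}
    (ha : f a ∈ S.map f) : ∃ v ∈ LinearMap.ker f, v - a ∈ S := by
  obtain ⟨w, hw, hfw⟩ := ha
  refine ⟨a - w, ?_, ?_⟩
  · rw [LinearMap.mem_ker, map_sub, hfw, sub_self]
  · simpa using S.neg_mem hw

end Coset

theorem Fintype.map_linearCombination_span_single {R M ι : Type*} [CommSemiring R]
    [AddCommMonoid M] [Module R M] [Fintype ι] [DecidableEq ι] {v : ι → M} {D : Set M}
    (hD : D ⊆ Set.range v) :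
    (span R {f | ∃ i, v i ∈ D ∧ f = Pi.single i (1 : R)}).map
        (Fintype.linearCombination R v) = span R D := by
  rw [map_span]
  congr 1
  ext z
  constructor
  · rintro ⟨_, ⟨i, hi, rfl⟩, rfl⟩
    simpa using hi
  · intro hz
    obtain ⟨i, rfl⟩ := hD hz
    exact ⟨Pi.single i 1, ⟨i, hz, rfl⟩, by simp⟩

theorem ZModModule.add_mem_of_mk_eq {M : Type*} [AddCommGroup M] [Module (ZMod 2) M]
    {W : Submodule (ZMod 2) M} {x y : M}
    (h : (Submodule.Quotient.mk x : M ⧸ W) = Submodule.Quotient.mk y) : x + y ∈ W := by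
  rw [← ZModModule.sub_eq_add]
  exact (Submodule.Quotient.eq W).mp h

theorem statement12_general (k : ℕ)
    (X : Finset (Fin k → ZMod 2))
    (D : Finset (Fin k → ZMod 2)) (hDX : D ⊆ X)
    (W : Submodule (ZMod 2) (Fin k → ZMod 2))
    (hW : W = Submodule.span (ZMod 2) (D : Set (Fin k → ZMod 2)))
    (spanB : Submodule (ZMod 2) ({x // x ∈ X} → ZMod 2))
    (hspanB : spanB = Submodule.span (ZMod 2)
      {v | ∃ x : {x // x ∈ X}, (x : Fin k → ZMod 2) ∈ D ∧ v = Pi.single x (1 : ZMod 2)})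
    (C : Set ({x // x ∈ X} → ZMod 2))
    (hC : C = {u | ∑ x : {x // x ∈ X}, u x • (x : Fin k → ZMod 2) = 0})
    (hA : ∀ t : (Fin k → ZMod 2) ⧸ W, t ≠ 0 →
      ∃ x ∈ X, (Submodule.Quotient.mk x : (Fin k → ZMod 2) ⧸ W) = t)
    (u : {x // x ∈ X} → ZMod 2) :
    ({v | v - u ∈ spanB} ∩ C).Nonempty ∨
      ∃ x : {x // x ∈ X},
        ({v | v - (u + Pi.single x 1) ∈ spanB} ∩ C).Nonempty := by
  classical
  set φ := Fintype.linearCombination (ZMod 2) ((↑) : {x // x ∈ X} → Fin k → ZMod 2)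
  have hCφ : C = LinearMap.ker φ := by
    rw [hC]
    rfl
  have hmap : spanB.map φ = W := by
    rw [hspanB, hW]
    exact Fintype.map_linearCombination_span_single (by simpa using hDX)
  have cube_meets_C : ∀ a, φ a ∈ W → ({v | v - a ∈ spanB} ∩ C).Nonempty := by
    intro a ha
    rw [← hmap] at ha
    obtain ⟨v, hvC, hva⟩ := exists_mem_ker_sub_mem_of_apply_mem_map ha
    exact ⟨v, hva, hCφ ▸ hvC⟩
  by_cases hu : (Submodule.Quotient.mk (φ u) : (Fin k → ZMod 2) ⧸ W) = 0
  · exact Or.inl (cube_meets_C u ((Submodule.Quotient.mk_eq_zero W).mp hu))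
  · obtain ⟨x, hxX, hx⟩ := hA _ hu
    refine Or.inr ⟨⟨x, hxX⟩, cube_meets_C _ ?_⟩
    rw [map_add, Fintype.linearCombination_apply_single, one_smul, add_comm]
    exact ZModModule.add_mem_of_mk_eq hx

/-- Assume condition (A). Then for every vertex `u ∈ 𝔽₂^X`, either the small cube
`S_u` containing `u` meets the Hamming code `C`, or there is a direction `x ∈ X`
such that the small cube containing `u + b(x)` meets `C`. -/
theorem statement12 (k d : ℕ) (hk : 1 ≤ k)
    (X : Finset (Fin k → ZMod 2)) (hX0 : (0 : Fin k → ZMod 2) ∉ X)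
    (hXcard : X.card = d)
    (D : Finset (Fin k → ZMod 2)) (hDX : D ⊆ X)
    (W : Submodule (ZMod 2) (Fin k → ZMod 2))
    (hW : W = Submodule.span (ZMod 2) (D : Set (Fin k → ZMod 2)))
    (spanB : Submodule (ZMod 2) ({x // x ∈ X} → ZMod 2))
    (hspanB : spanB = Submodule.span (ZMod 2)
      {v | ∃ x : {x // x ∈ X}, (x : Fin k → ZMod 2) ∈ D ∧ v = Pi.single x (1 : ZMod 2)})
    (C : Set ({x // x ∈ X} → ZMod 2))
    (hC : C = {u | ∑ x : {x // x ∈ X}, u x • (x : Fin k → ZMod 2) = 0})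
    (hA : ∀ t : (Fin k → ZMod 2) ⧸ W, t ≠ 0 →
      ∃ x ∈ X, (Submodule.Quotient.mk x : (Fin k → ZMod 2) ⧸ W) = t)
    (u : {x // x ∈ X} → ZMod 2) :
    ({v | v - u ∈ spanB} ∩ C).Nonempty ∨
      ∃ x : {x // x ∈ X},
        ({v | v - (u + Pi.single x 1) ∈ spanB} ∩ C).Nonempty :=
  statement12_general k X D hDX W hW spanB hspanB C hC hA u
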